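/- Divergence-free quantities after inversion: Let n ≥ 2, let U ⊆ ℝ² be open, and let u : U → ℝ^{n+1} be smooth, nowhere vanishing, with Δu = 0 on U. Set v = u/|u|². Then for all 1 ≤ i, j ≤ n+1, the vector field X_{i,j} = 2 (v_j ∇v_i − v_i ∇v_j)/|v|⁴ satisfies div(X_{i,j}) = 0 on U. -/

import Mathlib

open MeasureTheory Filter Topology Set
open scoped RealInnerProductSpace

noncomputable section

/-- The Euclidean plane. -/
abbrev E2 : Type := EuclideanSpace ℝ (Fin 2)
/-- Euclidean space `ℝ^{n+1}`. -/
abbrev Ey (n : ℕ) : Type := EuclideanSpace ℝ (Fin (n + 1))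

/-- Standard basis vectors of the plane. -/
def e2 (i : Fin 2) : E2 := EuclideanSpace.single i 1

/-- The Laplacian of a map on the plane. -/
def lapl {F : Type*} [NormedAddCommGroup F] [NormedSpace ℝ F] (u : E2 → F) (x : E2) : F :=
  ∑ i : Fin 2, fderiv ℝ (fun y => fderiv ℝ u y (e2 i)) x (e2 i)

/-- The squared (Frobenius) norm `|∇u|² = Σ_j |∇u_j|²` of the gradient. -/
def gradSq {F : Type*} [NormedAddCommGroup F] [NormedSpace ℝ F] (u : E2 → F) (x : E2) : ℝ :=
  ∑ i : Fin 2, ‖fderiv ℝ u x (e2 i)‖ ^ 2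

/-- The divergence of a plane vector field. -/
def divE (F : E2 → E2) (x : E2) : ℝ :=
  ∑ i : Fin 2, fderiv ℝ F x (e2 i) i

/-- The composition `σ ∘ u` of `u` with the inversion `σ(z) = z/|z|²` with respect to the
unit sphere. -/
def invmap {n : ℕ} (u : E2 → Ey n) : E2 → Ey n :=
  fun x => (‖u x‖ ^ 2)⁻¹ • u x

/-- The vector field `X_{i,j} = 2 (v_j ∇v_i − v_i ∇v_j)/|v|⁴`. -/
def Xfield {n : ℕ} (v : E2 → Ey n) (i j : Fin (n + 1)) (x : E2) : E2 :=
  (2 / ‖v x‖ ^ 4) •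
    (v x j • gradient (fun y => v y i) x - v x i • gradient (fun y => v y j) x)

/-! Write `v = c • u` with `c = |u|⁻²`. In `v_j ∇v_i − v_i ∇v_j` the terms containing `∇c` cancel,
leaving `c² (u_j ∇u_i − u_i ∇u_j)`, and since `|v| = |u|⁻¹` the prefactor `2 / |v|⁴ = 2 / c²` undoes
the `c²`: `X_{i,j} = 2 (u_j ∇u_i − u_i ∇u_j)` near every point of `U`. The divergence of this field
is `2 (u_j Δu_i − u_i Δu_j)`, the two `∇u_i · ∇u_j` terms cancelling, and it vanishes because `u`
is harmonic. -/

section Gradient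

variable {E : Type*} [NormedAddCommGroup E] [InnerProductSpace ℝ E] [CompleteSpace E]
  {c f g : E → ℝ} {f' g' x : E}

theorem HasGradientAt.mul (hf : HasGradientAt f f' x) (hg : HasGradientAt g g' x) :
    HasGradientAt (fun y => f y * g y) (f x • g' + g x • f') x := by
  rw [hasGradientAt_iff_hasFDerivAt] at hf hg ⊢
  rw [map_add, map_smulₛₗ, map_smulₛₗ, conj_trivial, conj_trivial]
  exact hf.fun_mul hg

theorem gradient_fun_mul (hf : DifferentiableAt ℝ f x) (hg : DifferentiableAt ℝ g x) :
    gradient (fun y => f y * g y) x = f x • gradient g x + g x • gradient f x :=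
  (hf.hasGradientAt.mul hg.hasGradientAt).gradient

theorem wronskian_mul_left (hc : DifferentiableAt ℝ c x) (hf : DifferentiableAt ℝ f x)
    (hg : DifferentiableAt ℝ g x) :
    (c x * f x) • gradient (fun y => c y * g y) x - (c x * g x) • gradient (fun y => c y * f y) x
      = c x ^ 2 • (f x • gradient g x - g x • gradient f x) := by
  rw [gradient_fun_mul hc hg, gradient_fun_mul hc hf]
  module

end Gradient

theorem ContDiffAt.differentiableAt_fderiv_apply {H F : Type*} [NormedAddCommGroup H]
    [NormedSpace ℝ H] [NormedAddCommGroup F] [NormedSpace ℝ F] {u : H → F} {x : H}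
    (hu : ContDiffAt ℝ 2 u x) (v : H) : DifferentiableAt ℝ (fun y => fderiv ℝ u y v) x :=
  ((hu.fderiv_right one_add_one_eq_two.le).differentiableAt one_ne_zero).clm_apply
    (differentiableAt_const v)

theorem ContinuousLinearMap.fderiv_comp_left_apply {H F G : Type*} [NormedAddCommGroup H]
    [NormedSpace ℝ H] [NormedAddCommGroup F] [NormedSpace ℝ F] [NormedAddCommGroup G]
    [NormedSpace ℝ G] (L : F →L[ℝ] G) {g : H → F} {x : H} (hg : DifferentiableAt ℝ g x)
    (v : H) : fderiv ℝ (fun y => L (g y)) x v = L (fderiv ℝ g x v) := by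
  have h : HasFDerivAt (fun y => L (g y)) (L.comp (fderiv ℝ g x)) x :=
    L.hasFDerivAt.comp x hg.hasFDerivAt
  rw [h.fderiv]
  rfl

theorem fderiv_euclidean_apply {ι H : Type*} [Fintype ι] [NormedAddCommGroup H]
    [NormedSpace ℝ H] {F : H → EuclideanSpace ℝ ι} {x : H} (hF : DifferentiableAt ℝ F x)
    (k : ι) (v : H) : fderiv ℝ (fun y => F y k) x v = fderiv ℝ F x v k :=
  (EuclideanSpace.proj k).fderiv_comp_left_apply hF v

theorem lapl_clm_comp {F G : Type*} [NormedAddCommGroup F] [NormedSpace ℝ F]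
    [NormedAddCommGroup G] [NormedSpace ℝ G] (L : F →L[ℝ] G) {u : E2 → F} {x : E2}
    (hu : ContDiffAt ℝ 2 u x) : lapl (fun y => L (u y)) x = L (lapl u x) := by
  have hfderiv : ∀ᶠ y in 𝓝 x, fderiv ℝ (fun z => L (u z)) y = L.comp (fderiv ℝ u y) := by
    filter_upwards [hu.eventually (by simp)] with y hy
    exact (L.hasFDerivAt.comp y (hy.differentiableAt two_ne_zero).hasFDerivAt).fderiv
  simp only [lapl, map_sum]
  refine Finset.sum_congr rfl fun i _ => ?_
  have hi : (fun y => fderiv ℝ (fun z => L (u z)) y (e2 i)) =ᶠ[𝓝 x]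
      fun y => L (fderiv ℝ u y (e2 i)) := by
    filter_upwards [hfderiv] with y hy
    rw [hy, ContinuousLinearMap.comp_apply]
  rw [hi.fderiv_eq, L.fderiv_comp_left_apply (hu.differentiableAt_fderiv_apply (e2 i))]

theorem lapl_euclidean_apply {ι : Type*} [Fintype ι] {u : E2 → EuclideanSpace ℝ ι} {x : E2}
    (hu : ContDiffAt ℝ 2 u x) (k : ι) : lapl (fun y => u y k) x = lapl u x k :=
  lapl_clm_comp (EuclideanSpace.proj k) hu

theorem gradient_apply_e2 (f : E2 → ℝ) (y : E2) (a : Fin 2) :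
    gradient f y a = fderiv ℝ f y (e2 a) := by
  rw [← inner_gradient_left, e2, EuclideanSpace.inner_single_right]
  simp

theorem differentiableAt_gradient_e2 {f : E2 → ℝ} {x : E2} (hf : ContDiffAt ℝ 2 f x) :
    DifferentiableAt ℝ (gradient f) x := by
  rw [differentiableAt_euclidean]
  intro a
  simp_rw [gradient_apply_e2]
  exact hf.differentiableAt_fderiv_apply (e2 a)

section Divergence

variable {F G : E2 → E2} {f g : E2 → ℝ} {x : E2}

theorem Filter.EventuallyEq.divE_eq (h : F =ᶠ[𝓝 x] G) : divE F x = divE G x := by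
  simp only [divE, h.fderiv_eq]

theorem divE_const_smul (c : ℝ) : divE (fun y => c • F y) x = c * divE F x := by
  change divE (c • F) x = _
  simp only [divE, fderiv_const_smul_field, Pi.smul_apply, smul_apply, PiLp.smul_apply,
    smul_eq_mul, Finset.mul_sum]

theorem divE_sub (hF : DifferentiableAt ℝ F x) (hG : DifferentiableAt ℝ G x) :
    divE (fun y => F y - G y) x = divE F x - divE G x := by
  simp [divE, fderiv_fun_sub hF hG, Finset.sum_sub_distrib]

theorem divE_smul (hf : DifferentiableAt ℝ f x) (hG : DifferentiableAt ℝ G x) :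
    divE (fun y => f y • G y) x = ⟪gradient f x, G x⟫ + f x * divE G x := by
  have hinner : ⟪gradient f x, G x⟫ = ∑ a, G x a * fderiv ℝ f x (e2 a) := by
    simp only [PiLp.inner_apply, gradient_apply_e2, RCLike.inner_apply, conj_trivial]
  simp only [divE, fderiv_fun_smul hf hG, add_apply, smul_apply,
    ContinuousLinearMap.smulRight_apply, PiLp.add_apply, PiLp.smul_apply, smul_eq_mul,
    Finset.sum_add_distrib, Fin.sum_univ_two, hinner]
  ring

theorem divE_gradient (hf : ContDiffAt ℝ 2 f x) : divE (gradient f) x = lapl f x := by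
  simp only [divE, ← fderiv_euclidean_apply (differentiableAt_gradient_e2 hf), gradient_apply_e2]
  rfl

theorem divE_wronskian (hf : ContDiffAt ℝ 2 f x) (hg : ContDiffAt ℝ 2 g x) :
    divE (fun y => f y • gradient g y - g y • gradient f y) x = f x * lapl g x - g x * lapl f x := by
  have hf1 := hf.differentiableAt two_ne_zero
  have hg1 := hg.differentiableAt two_ne_zero
  have hfg := differentiableAt_gradient_e2 hf
  have hgg := differentiableAt_gradient_e2 hg
  rw [divE_sub (F := fun y => f y • gradient g y) (G := fun y => g y • gradient f y)
      (hf1.smul hgg) (hg1.smul hfg),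
    divE_smul hf1 hgg, divE_smul hg1 hfg, divE_gradient hf, divE_gradient hg, real_inner_comm]
  ring

end Divergence

section Inversion

variable {n : ℕ} {u : E2 → Ey n} {y : E2}

theorem invmap_apply (k : Fin (n + 1)) :
    invmap u y k = (‖u y‖ ^ 2)⁻¹ * u y k :=
  rfl

theorem norm_invmap : ‖invmap u y‖ = ‖u y‖⁻¹ := by
  rcases eq_or_ne ‖u y‖ 0 with h | h
  · simp [invmap, h]
  · rw [invmap, norm_smul, norm_inv, norm_pow, norm_norm]
    field_simp

theorem Xfield_invmap (hu : DifferentiableAt ℝ u y) (h0 : u y ≠ 0) (i j : Fin (n + 1)) :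
    Xfield (invmap u) i j y =
      (2 : ℝ) • (u y j • gradient (fun z => u z i) y - u y i • gradient (fun z => u z j) y) := by
  have hc : DifferentiableAt ℝ (fun z => (‖u z‖ ^ 2)⁻¹) y :=
    (hu.norm_sq ℝ).inv (by positivity)
  have hcoord := differentiableAt_euclidean.mp hu
  simp only [Xfield, invmap_apply, norm_invmap]
  rw [wronskian_mul_left hc (hcoord j) (hcoord i), smul_smul]
  congr 1
  have : ‖u y‖ ≠ 0 := norm_ne_zero_iff.mpr h0
  field_simp

end Inversion

theorem divergence_free_after_inversion_general (n : ℕ)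
    (U : Set E2) (hU : IsOpen U) (u : E2 → Ey n)
    (hsm : ContDiffOn ℝ (⊤ : ℕ∞) u U) (hnv : ∀ x ∈ U, u x ≠ 0)
    (hharm : ∀ x ∈ U, lapl u x = 0) :
    ∀ i j : Fin (n + 1), ∀ x ∈ U,
      divE (Xfield (invmap u) i j) x = 0 := by
  intro i j x hx
  have hu : ∀ y ∈ U, ContDiffAt ℝ 2 u y := fun y hy =>
    (hsm.contDiffAt (hU.mem_nhds hy)).of_le (WithTop.coe_le_coe.mpr le_top)
  have hcoord := contDiffAt_euclidean.mp (hu x hx)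
  have hX : Xfield (invmap u) i j =ᶠ[𝓝 x] fun y =>
      (2 : ℝ) • (u y j • gradient (fun z => u z i) y - u y i • gradient (fun z => u z j) y) :=
    eventually_of_mem (hU.mem_nhds hx) fun y hy =>
      Xfield_invmap ((hu y hy).differentiableAt two_ne_zero) (hnv y hy) i j
  rw [hX.divE_eq, divE_const_smul, divE_wronskian (hcoord j) (hcoord i),
    lapl_euclidean_apply (hu x hx), lapl_euclidean_apply (hu x hx), hharm x hx]
  simp

/-- **Divergence-free quantities after inversion.** If `u` is smooth, nowhere vanishing
and harmonic on an open set `U ⊆ ℝ²` and `v = u/|u|²`, then for all `1 ≤ i,j ≤ n+1` the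
vector field `X_{i,j} = 2 (v_j ∇v_i − v_i ∇v_j)/|v|⁴` is divergence free on `U`. -/
theorem divergence_free_after_inversion (n : ℕ) (hn : 2 ≤ n)
    (U : Set E2) (hU : IsOpen U) (u : E2 → Ey n)
    (hsm : ContDiffOn ℝ (⊤ : ℕ∞) u U) (hnv : ∀ x ∈ U, u x ≠ 0)
    (hharm : ∀ x ∈ U, lapl u x = 0) :
    ∀ i j : Fin (n + 1), ∀ x ∈ U,
      divE (Xfield (invmap u) i j) x = 0 :=
  divergence_free_after_inversion_general n U hU u hsm hnv hharm
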